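/- If X is a random variable taking values in (0,1] such that P(X ≤ t) ≤ t for all t ∈ (0,1), then for any random variable Y with the same property (not necessarily independent of X), P(2·min(X,Y) ≤ t) ≤ t for all t ∈ (0,1). -/
import Mathlib


open MeasureTheory Set

/-- If `X` and `Y` are random variables with values in `(0,1]` satisfying the
super-uniformity condition `P(X ≤ t) ≤ t` and `P(Y ≤ t) ≤ t` for all `t ∈ (0,1)`,
then `P(2 · min(X,Y) ≤ t) ≤ t` for all `t ∈ (0,1)`. -/
theorem two_min_superuniform {Ω : Type*} [MeasurableSpace Ω] (μ : Measure Ω)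
    [IsProbabilityMeasure μ] (X Y : Ω → ℝ)
    (hXr : ∀ ω, X ω ∈ Set.Ioc (0 : ℝ) 1) (hYr : ∀ ω, Y ω ∈ Set.Ioc (0 : ℝ) 1)
    (hX : ∀ t ∈ Set.Ioo (0 : ℝ) 1, μ {ω | X ω ≤ t} ≤ ENNReal.ofReal t)
    (hY : ∀ t ∈ Set.Ioo (0 : ℝ) 1, μ {ω | Y ω ≤ t} ≤ ENNReal.ofReal t) :
    ∀ t ∈ Set.Ioo (0 : ℝ) 1, μ {ω | 2 * min (X ω) (Y ω) ≤ t} ≤ ENNReal.ofReal t := by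
  intro t ht
  obtain ⟨ht0, ht1⟩ := ht
  have h2 : (t/2 : ℝ) ∈ Set.Ioo (0:ℝ) 1 := ⟨by linarith, by linarith⟩
  have hsub : {ω | 2 * min (X ω) (Y ω) ≤ t} ⊆ {ω | X ω ≤ t/2} ∪ {ω | Y ω ≤ t/2} := by
    intro ω hω
    simp only [Set.mem_setOf_eq] at hω
    rcases min_cases (X ω) (Y ω) with ⟨h, _⟩ | ⟨h, _⟩
    · left; simp only [Set.mem_setOf_eq]; rw [h] at hω; linarith
    · right; simp only [Set.mem_setOf_eq]; rw [h] at hω; linarith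
  calc μ {ω | 2 * min (X ω) (Y ω) ≤ t} ≤ μ ({ω | X ω ≤ t/2} ∪ {ω | Y ω ≤ t/2}) :=
        measure_mono hsub
    _ ≤ μ {ω | X ω ≤ t/2} + μ {ω | Y ω ≤ t/2} := measure_union_le _ _
    _ ≤ ENNReal.ofReal (t/2) + ENNReal.ofReal (t/2) := add_le_add (hX _ h2) (hY _ h2)
    _ = ENNReal.ofReal t := by rw [← ENNReal.ofReal_add (by linarith) (by linarith)]; ring_nf
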